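/- Let G be a finite p-group and g an element of G of order p^k with k ≥ 2. Let N be the normal closure of g^(p^(k-1)) in G. Then g^(p^(k-2)) is not an element of N. -/
import Mathlib

/-- In a finite `p`-group, every `p`-th power lies in every maximal subgroup. -/
lemma pow_p_mem_coatom {P : Type*} [Group P] [Finite P] {p : ℕ} (hp : p.Prime)
    (hP : IsPGroup p P) (y : P) {M : Subgroup P} (hM : IsCoatom M) : y ^ p ∈ M := by
  haveI : Fact p.Prime := ⟨hp⟩
  haveI : Group.IsNilpotent P := hP.isNilpotent
  haveI hMnormal : M.Normal :=
    Subgroup.NormalizerCondition.normal_of_coatom M normalizerCondition_of_isNilpotent hM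
  set π := QuotientGroup.mk' M with hπ
  by_contra hyp
  have ha : π (y ^ p) ≠ 1 := by
    intro h
    exact hyp ((QuotientGroup.eq_one_iff _).mp h)
  set a : P ⧸ M := π y with haa
  have hap : π (y ^ p) = a ^ p := by simp [haa]
  -- the preimage of ⟨a^p⟩ strictly contains M, hence is ⊤
  have hlt : M < Subgroup.comap π (Subgroup.zpowers (a ^ p)) := by
    constructor
    · intro m hm
      have h1 : π m = 1 := (QuotientGroup.eq_one_iff m).mpr hm
      exact Subgroup.mem_comap.mpr (by rw [h1]; exact Subgroup.one_mem _)
    · intro hle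
      apply hyp
      have : y ^ p ∈ Subgroup.comap π (Subgroup.zpowers (a ^ p)) := by
        simp only [Subgroup.mem_comap, hap]
        exact Subgroup.mem_zpowers _
      exact hle this
  have htop : Subgroup.comap π (Subgroup.zpowers (a ^ p)) = ⊤ := hM.2 _ hlt
  have hZtop : Subgroup.zpowers (a ^ p) = ⊤ := by
    have := Subgroup.map_comap_eq_self_of_surjective
      (QuotientGroup.mk'_surjective M) (Subgroup.zpowers (a ^ p))
    rw [htop] at this
    rw [← this]
    exact Subgroup.map_top_of_surjective _ (QuotientGroup.mk'_surjective M)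
  -- hence a ∈ ⟨a^p⟩, giving p ∣ p*n - 1 for some n, contradiction
  have haZ : a ∈ Subgroup.zpowers (a ^ p) := hZtop ▸ Subgroup.mem_top a
  obtain ⟨n, hn⟩ := haZ
  have hn' : (a ^ p) ^ n = a := hn
  have hpn : a ^ ((p : ℤ) * n) = a := by rw [zpow_mul, zpow_natCast]; exact hn'
  have hone : a ^ ((p : ℤ) * n - 1) = 1 := by
    rw [zpow_sub, zpow_one, hpn]; simp
  have hdvd : (orderOf a : ℤ) ∣ (p : ℤ) * n - 1 := orderOf_dvd_iff_zpow_eq_one.mpr hone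
  have hane : a ≠ 1 := by
    intro h
    apply ha
    rw [hap, h, one_pow]
  obtain ⟨m, hm⟩ := (IsPGroup.iff_orderOf.mp (hP.to_quotient M)) a
  have hm1 : 1 ≤ m := by
    rcases Nat.eq_zero_or_pos m with h0 | h1
    · exfalso; apply hane; rw [← orderOf_eq_one_iff, hm, h0, pow_zero]
    · exact h1
  have hpdvd : (p : ℤ) ∣ (orderOf a : ℤ) := by
    rw [hm]
    exact_mod_cast dvd_pow_self p (Nat.one_le_iff_ne_zero.mp hm1)
  have : (p : ℤ) ∣ 1 := by
    have h1 : (p : ℤ) ∣ (p : ℤ) * n - 1 := hpdvd.trans hdvd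
    have h2 : (p : ℤ) ∣ (p : ℤ) * n := Dvd.intro n rfl
    simpa using dvd_sub h2 h1
  have := Int.le_of_dvd one_pos this
  have := hp.two_le
  omega

lemma pow_p_mem_frattini {P : Type*} [Group P] [Finite P] {p : ℕ} (hp : p.Prime)
    (hP : IsPGroup p P) (y : P) : y ^ p ∈ frattini P := by
  rw [frattini, Order.radical]
  simp only [Subgroup.mem_iInf]
  exact fun M hM => pow_p_mem_coatom hp hP y hM

theorem pGroup_pow_not_mem_normalClosure
    {G : Type*} [Group G] [Finite G] {p : ℕ} (hp : p.Prime)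
    (hG : IsPGroup p G) (g : G) (k : ℕ) (hk : 2 ≤ k)
    (hord : orderOf g = p ^ k) :
    g ^ p ^ (k - 2) ∉ Subgroup.normalClosure {g ^ p ^ (k - 1)} := by
  haveI : Fact p.Prime := ⟨hp⟩
  intro hy
  set x := g ^ p ^ (k - 1) with hx
  set N := Subgroup.normalClosure {x} with hN
  have hxN : x ∈ N := Subgroup.subset_normalClosure rfl
  have hxne : x ≠ 1 := by
    intro h
    have : orderOf g ∣ p ^ (k - 1) := orderOf_dvd_of_pow_eq_one h
    rw [hord] at this
    rw [Nat.pow_dvd_pow_iff_le_right hp.one_lt] at this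
    omega
  --ding: y'^p = x inside N
  set y' : N := ⟨g ^ p ^ (k - 2), hy⟩ with hy'
  have hcoe : ((y' ^ p : N) : G) = x := by
    rw [hy']
    push_cast
    rw [← pow_mul, ← pow_succ]
    congr 1
    congr 1
    omega
  have hNp : IsPGroup p N := hG.to_subgroup N
  have hfrat : y' ^ p ∈ frattini N := pow_p_mem_frattini hp hNp y'
  -- the image of frattini N in G is normal and contains x
  haveI : (Subgroup.map N.subtype (frattini N)).Normal :=
    ConjAct.normal_of_characteristic_of_normal
  have hxF : x ∈ Subgroup.map N.subtype (frattini N) := ⟨y' ^ p, hfrat, hcoe⟩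
  have hNle : N ≤ Subgroup.map N.subtype (frattini N) :=
    Subgroup.normalClosure_le_normal (Set.singleton_subset_iff.mpr hxF)
  -- hence frattini N = ⊤
  have hfrattop : frattini N = ⊤ := by
    rw [eq_top_iff]
    rintro ⟨n, hn⟩ -
    obtain ⟨m, hm, hmeq⟩ := hNle hn
    have : m = ⟨n, hn⟩ := Subtype.ext hmeq
    rwa [← this]
  -- but N is nontrivial finite, so it has a maximal subgroup
  have hbot : (⊥ : Subgroup N) ≠ ⊤ := by
    intro h
    have : (⟨x, hxN⟩ : N) ∈ (⊥ : Subgroup N) := h ▸ Subgroup.mem_top _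
    rw [Subgroup.mem_bot] at this
    exact hxne (congrArg Subtype.val this)
  obtain ⟨M, hM, -⟩ :=
    ((Finite.to_isCoatomic (α := Subgroup N)).eq_top_or_exists_le_coatom ⊥).resolve_left hbot
  exact hM.1 (eq_top_iff.mpr (hfrattop ▸ frattini_le_coatom hM))
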